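/- For all real numbers r ≥ 0 and h ≥ ℓ ≥ 0, one has √(1+h)·(1+r)·(h − ℓ) ≥ (r+2)·(√(1+h) − √(1+ℓ)). -/
import Mathlib

/-- Key inequality in the equilibrium characterization: for `r ≥ 0` and `h ≥ ℓ ≥ 0`,
`√(1+h)·(1+r)·(h − ℓ) ≥ (r+2)·(√(1+h) − √(1+ℓ))`. -/
theorem sqrt_fee_gap_inequality
    (r ℓ h : ℝ) (hr : 0 ≤ r) (hℓ : 0 ≤ ℓ) (hℓh : ℓ ≤ h) :
    (r + 2) * (Real.sqrt (1 + h) - Real.sqrt (1 + ℓ)) ≤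
      Real.sqrt (1 + h) * (1 + r) * (h - ℓ) := by
  set a := Real.sqrt (1 + h) with hadef
  set b := Real.sqrt (1 + ℓ) with hbdef
  have hb1 : (1:ℝ) ≤ b := by
    have := Real.sqrt_le_sqrt (show (1:ℝ) ≤ 1 + ℓ by linarith)
    simpa [hbdef] using this
  have hab : b ≤ a := Real.sqrt_le_sqrt (by linarith)
  have ha2 : a ^ 2 = 1 + h := Real.sq_sqrt (by linarith)
  have hb2 : b ^ 2 = 1 + ℓ := Real.sq_sqrt (by linarith)
  have ha1 : (1:ℝ) ≤ a := le_trans hb1 hab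
  have key : r + 2 ≤ a * (1 + r) * (a + b) := by
    nlinarith [mul_nonneg (mul_nonneg (sub_nonneg.2 ha1) (show (0:ℝ) ≤ 1 + r by linarith))
        (show (0:ℝ) ≤ a + b by linarith),
      mul_nonneg hr (show (0:ℝ) ≤ a + b - 2 by linarith)]
  have hd : 0 ≤ a - b := by linarith
  have hhl : h - ℓ = (a - b) * (a + b) := by nlinarith
  rw [hhl]
  calc (r + 2) * (a - b) ≤ (a * (1 + r) * (a + b)) * (a - b) :=
        mul_le_mul_of_nonneg_right key hd
    _ = a * (1 + r) * ((a - b) * (a + b)) := by ring
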